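/- The family f_t(e₁) = (√t/2)e₁ + (√t/2)e₂, f_t(e₂) = t·e₁ (t > 0) contracts ψ₅ onto an algebra isomorphic to ψ₃: the limit as t → 0⁺ of f_t⁻¹(ψ₅(f_t(x), f_t(y))) exists for all x, y, and gives a product isomorphic to e₁∘e₁ = e₂, e₂∘e₂ = 0, e₁∘e₂ = 0. -/

import Mathlib

open Filter Topology

/-- ψ₅ : e₁∘e₁ = e₁, e₂∘e₂ = −e₁, e₁∘e₂ = e₂. -/
def psi5 (x y : ℝ × ℝ) : ℝ × ℝ := (x.1 * y.1 - x.2 * y.2, x.1 * y.2 + x.2 * y.1)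

/-- ψ₃ : e₁∘e₁ = e₂, e₂∘e₂ = 0, e₁∘e₂ = 0. -/
def psi3 (x y : ℝ × ℝ) : ℝ × ℝ := (0, x.1 * y.1)

/-- f_t(e₁) = (√t/2)e₁ + (√t/2)e₂, f_t(e₂) = t·e₁. -/
noncomputable def ft (t : ℝ) (x : ℝ × ℝ) : ℝ × ℝ :=
  (Real.sqrt t / 2 * x.1 + t * x.2, Real.sqrt t / 2 * x.1)

/-- The inverse of f_t (for t > 0). -/
noncomputable def ftInv (t : ℝ) (u : ℝ × ℝ) : ℝ × ℝ :=
  (2 * u.2 / Real.sqrt t, (u.1 - u.2) / t)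

/-!
Writing `s = √t`, the transported product `f_t⁻¹(ψ₅(f_t x, f_t y))` is
`(s x₁y₁ + s²(x₁y₂ + x₂y₁), -x₁y₁/2 + s² x₂y₂)`, a polynomial in `s`; at `s = 0` it is
`(0, -x₁y₁/2)`, which rescaling the second coordinate by `-2` turns into `ψ₃`.
-/

noncomputable def psi5Contracted (x y : ℝ × ℝ) : ℝ × ℝ := (0, -(x.1 * y.1) / 2)

lemma ftInv_psi5_ft {t : ℝ} (ht : 0 < t) (x y : ℝ × ℝ) :
    ftInv t (psi5 (ft t x) (ft t y)) =
      (Real.sqrt t * (x.1 * y.1) + t * (x.1 * y.2 + x.2 * y.1),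
        -(x.1 * y.1) / 2 + t * (x.2 * y.2)) := by
  obtain ⟨s, hs, rfl⟩ : ∃ s : ℝ, 0 < s ∧ s ^ 2 = t :=
    ⟨Real.sqrt t, Real.sqrt_pos.mpr ht, Real.sq_sqrt ht.le⟩
  simp only [ftInv, psi5, ft, Real.sqrt_sq hs.le, Prod.mk.injEq]
  constructor <;> (field_simp; ring)

lemma tendsto_ftInv_psi5_ft (x y : ℝ × ℝ) :
    Tendsto (fun t : ℝ => ftInv t (psi5 (ft t x) (ft t y))) (𝓝[>] 0)
      (𝓝 (psi5Contracted x y)) := by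
  set F : ℝ → ℝ × ℝ := fun t =>
    (Real.sqrt t * (x.1 * y.1) + t * (x.1 * y.2 + x.2 * y.1), -(x.1 * y.1) / 2 + t * (x.2 * y.2))
  have hF : Tendsto F (𝓝[>] 0) (𝓝 (psi5Contracted x y)) := by
    have hcont : Continuous F := by fun_prop
    have hF0 : F 0 = psi5Contracted x y := by simp [F, psi5Contracted]
    exact hF0 ▸ hcont.continuousWithinAt.tendsto
  refine hF.congr' ?_
  filter_upwards [self_mem_nhdsWithin] with t ht
  exact (ftInv_psi5_ft ht x y).symm

noncomputable def scaleSndNegTwo : (ℝ × ℝ) ≃ₗ[ℝ] (ℝ × ℝ) :=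
  LinearEquiv.prodCongr (LinearEquiv.refl ℝ ℝ) (LinearEquiv.smulOfNeZero ℝ ℝ (-2) (by norm_num))

lemma scaleSndNegTwo_psi5Contracted (x y : ℝ × ℝ) :
    scaleSndNegTwo (psi5Contracted x y) = psi3 (scaleSndNegTwo x) (scaleSndNegTwo y) := by
  simp only [scaleSndNegTwo, psi5Contracted, psi3, LinearEquiv.prodCongr_apply,
    LinearEquiv.refl_apply, LinearEquiv.smulOfNeZero_apply, smul_eq_mul, Prod.mk.injEq, true_and]
  ring

theorem stmt_16 :
    ∃ φ' : ℝ × ℝ → ℝ × ℝ → ℝ × ℝ,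
      (∀ x y : ℝ × ℝ,
        Tendsto (fun t : ℝ => ftInv t (psi5 (ft t x) (ft t y)))
          (𝓝[>] 0) (𝓝 (φ' x y))) ∧
      ∃ g : (ℝ × ℝ) ≃ₗ[ℝ] (ℝ × ℝ), ∀ x y, g (φ' x y) = psi3 (g x) (g y) :=
  ⟨psi5Contracted, tendsto_ftInv_psi5_ft, scaleSndNegTwo, scaleSndNegTwo_psi5Contracted⟩
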